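/- Let σ and μ be compactly supported Borel probability measures on ℝ^m and let γ be an optimal coupling of σ and μ, i.e. a coupling with ∫|x−y|² dγ(x,y) = W₂²(σ, μ). Let ψ : ℝ^m → ℝ be of class C² with bounded gradient and bounded Hessian, let (U_t) be the flow of ∇ψ, and set μ_t = (U_t)_#μ. Assume moreover that for each t ∈ (0,1] there exists an optimal coupling γ_t of σ and μ_t, and that the couplings η_t := ((x,y) ↦ (x, U_t^{-1}(y)))_# γ_t of σ and μ converge weakly to γ as t → 0⁺. Then the limit lim_{t→0⁺} (W₂²(σ, μ_t) − W₂²(σ, μ))/t exists and equals 2 ∫ ⟨∇ψ(y), y − x⟩ dγ(x, y). -/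

import Mathlib

/-!
Pushing the optimal coupling `γ` forward by `(x, y) ↦ (x, U_t y)` gives a coupling of `σ`
and `μ_t`, so `W₂²(σ, μ_t) - W₂²(σ, μ) ≤ ∫ (|x - U_t y|² - |x - y|²) dγ`. Conversely `γ_t`
is the image of the coupling `η_t` of `σ` and `μ` under the same map, so the difference is at
least `∫ (|x - U_t y|² - |x - y|²) dη_t`. Since `U_t y = y + t ∇ψ(y) + O(t²)` uniformly and
all these couplings live on a bounded set, both integrands are `2t ⟨∇ψ(y), y - x⟩ + O(t²)`.
Dividing by `t`, the weak convergence `η_t → γ` (tested on a bounded truncation of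
`⟨∇ψ(y), y - x⟩`) squeezes the quotient.
-/

open MeasureTheory RealInnerProductSpace Filter

/-- The squared Wasserstein distance of order 2: the infimum of `∫ d(x,y)² dπ` over all
couplings `π` of `μ` and `ν`. -/
noncomputable def W2sq {X : Type*} [MeasurableSpace X] [PseudoMetricSpace X]
    (μ ν : Measure X) : ℝ :=
  sInf {r : ℝ | ∃ π : Measure (X × X), π.map Prod.fst = μ ∧ π.map Prod.snd = ν ∧
    r = ∫ p, dist p.1 p.2 ^ 2 ∂π}

open Set Topology Function
open scoped NNReal

section Coupling

variable {X : Type*} [MeasurableSpace X]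

structure IsCoupling (π : Measure (X × X)) (μ ν : Measure X) : Prop where
  map_fst : π.map Prod.fst = μ
  map_snd : π.map Prod.snd = ν

variable {π : Measure (X × X)} {μ ν : Measure X}

theorem IsCoupling.isProbabilityMeasure [IsProbabilityMeasure μ] (h : IsCoupling π μ ν) :
    IsProbabilityMeasure π := by
  have : IsProbabilityMeasure (π.map Prod.fst) := h.map_fst ▸ ‹_›
  exact Measure.isProbabilityMeasure_of_map Prod.fst

theorem IsCoupling.map_right (h : IsCoupling π μ ν) {S : X → X} (hS : Measurable S) :
    IsCoupling (π.map fun q => (q.1, S q.2)) μ (ν.map S) := by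
  have hmeas : Measurable fun q : X × X => (q.1, S q.2) := by fun_prop
  constructor
  · rw [Measure.map_map measurable_fst hmeas]
    exact h.map_fst
  · rw [Measure.map_map measurable_snd hmeas, ← h.map_snd, Measure.map_map hS measurable_snd]
    rfl

theorem IsCoupling.map_right_of_leftInverse {T S : X → X} (h : IsCoupling π μ (ν.map T))
    (hT : Measurable T) (hS : Measurable S) (hST : LeftInverse S T) :
    IsCoupling (π.map fun q => (q.1, S q.2)) μ ν := by
  simpa [Measure.map_map hS hT, hST.comp_eq_id] using h.map_right hS

variable [PseudoMetricSpace X]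

theorem W2sq_le_integral (h : IsCoupling π μ ν) : W2sq μ ν ≤ ∫ p, dist p.1 p.2 ^ 2 ∂π :=
  csInf_le ⟨0, by rintro r ⟨π', -, -, rfl⟩; positivity⟩ ⟨π, h.map_fst, h.map_snd, rfl⟩

theorem exists_forall_isCoupling_ae_dist_le (hμ : ∃ K, IsCompact K ∧ μ Kᶜ = 0)
    (hν : ∃ K, IsCompact K ∧ ν Kᶜ = 0) :
    ∃ D, ∀ π : Measure (X × X), IsCoupling π μ ν → ∀ᵐ p ∂π, dist p.1 p.2 ≤ D := by
  obtain ⟨Kμ, hKμ, hμ⟩ := hμ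
  obtain ⟨Kν, hKν, hν⟩ := hν
  obtain ⟨D, hD⟩ := Metric.isBounded_iff.1 (hKμ.union hKν).isBounded
  refine ⟨D, fun π h => ?_⟩
  have h₁ : ∀ᵐ p ∂π, p.1 ∈ Kμ :=
    ae_of_ae_map measurable_fst.aemeasurable (h.map_fst ▸ ae_iff.2 hμ)
  have h₂ : ∀ᵐ p ∂π, p.2 ∈ Kν :=
    ae_of_ae_map measurable_snd.aemeasurable (h.map_snd ▸ ae_iff.2 hν)
  filter_upwards [h₁, h₂] with p hp₁ hp₂
  exact hD (Or.inl hp₁) (Or.inr hp₂)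

variable [OpensMeasurableSpace X] [SecondCountableTopology X]

theorem integral_dist_sq_map_right {S T : X → X} (hS : Measurable S) (hT : Measurable T) :
    ∫ p, dist p.1 (T p.2) ^ 2 ∂(π.map fun q => (q.1, S q.2)) =
      ∫ p, dist p.1 (T (S p.2)) ^ 2 ∂π :=
  integral_map (by fun_prop)
    (by fun_prop : Measurable fun p : X × X => dist p.1 (T p.2) ^ 2).aestronglyMeasurable

theorem W2sq_map_le_integral (h : IsCoupling π μ ν) {T : X → X} (hT : Measurable T) :
    W2sq μ (ν.map T) ≤ ∫ p, dist p.1 (T p.2) ^ 2 ∂π :=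
  (W2sq_le_integral (h.map_right hT)).trans_eq (integral_dist_sq_map_right hT measurable_id)

end Coupling

theorem Measurable.measurable_of_inverse {X Y : Type*} [MeasurableSpace X]
    [StandardBorelSpace X] [MeasurableSpace Y] [MeasurableSpace.CountablySeparated Y]
    {V : X → Y} {U : Y → X} (hV : Measurable V) (hVU : LeftInverse V U)
    (hUV : RightInverse V U) : Measurable U := fun s hs => by
  -- Lusin–Souslin: the injective measurable map `V` sends measurable sets to measurable sets.
  rw [← image_eq_preimage_of_inverse hUV hVU]
  exact (hV.measurableEmbedding hUV.injective).measurableSet_image.2 hs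

section Flow

variable {E : Type*} [NormedAddCommGroup E] [NormedSpace ℝ E] {F : E → E} {U : ℝ → E → E}
  {K : ℝ} {t : ℝ}

theorem norm_flow_sub_le (hU0 : ∀ x, U 0 x = x)
    (hU : ∀ x t, HasDerivAt (fun s => U s x) (F (U t x)) t) (hF : ∀ x, ‖F x‖ ≤ K) (x : E)
    (ht : 0 ≤ t) : ‖U t x - x‖ ≤ K * t := by
  have h := norm_image_sub_le_of_norm_deriv_le_segment' (f := fun s => U s x)
    (fun s _ => (hU x s).hasDerivWithinAt) (fun s _ => hF _) t (right_mem_Icc.2 ht)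
  simpa [hU0] using h

theorem norm_flow_sub_sub_smul_le (hU0 : ∀ x, U 0 x = x)
    (hU : ∀ x t, HasDerivAt (fun s => U s x) (F (U t x)) t) (hF : ∀ x, ‖F x‖ ≤ K)
    {L : ℝ≥0} (hFL : LipschitzWith L F) (x : E) (ht : 0 ≤ t) :
    ‖U t x - x - t • F x‖ ≤ L * K * t ^ 2 := by
  have hderiv : ∀ s ∈ Icc 0 t, HasDerivWithinAt (fun s => U s x - s • F x)
      (F (U s x) - F x) (Icc 0 t) s := fun s _ =>
    ((hU x s).sub ((hasDerivAt_id s).smul_const (F x) |>.congr_deriv (one_smul ℝ _)))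
      |>.hasDerivWithinAt
  have hbound : ∀ s ∈ Ico 0 t, ‖F (U s x) - F x‖ ≤ L * (K * t) := fun s hs =>
    calc ‖F (U s x) - F x‖ ≤ L * ‖U s x - x‖ := hFL.norm_sub_le _ _
      _ ≤ L * (K * t) := by
        gcongr
        exact (norm_flow_sub_le hU0 hU hF x hs.1).trans
          (mul_le_mul_of_nonneg_left hs.2.le ((norm_nonneg _).trans (hF x)))
  have h := norm_image_sub_le_of_norm_deriv_le_segment' hderiv hbound t (right_mem_Icc.2 ht)
  calc ‖U t x - x - t • F x‖ = ‖U t x - t • F x - (U 0 x - (0 : ℝ) • F x)‖ := by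
        rw [hU0, zero_smul, sub_zero, sub_right_comm]
    _ ≤ L * (K * t) * (t - 0) := h
    _ = L * K * t ^ 2 := by ring

end Flow

section Expansion

variable {E : Type*} [NormedAddCommGroup E] [InnerProductSpace ℝ E]

theorem abs_dist_sq_sub_dist_sq_sub_inner_le (x y z v : E) :
    |dist x z ^ 2 - dist x y ^ 2 - 2 * ⟪v, y - x⟫| ≤
      2 * dist x y * ‖z - y - v‖ + ‖z - y‖ ^ 2 := by
  have hexp : dist x z ^ 2 - dist x y ^ 2 - 2 * ⟪v, y - x⟫ =
      -(2 * ⟪x - y, z - y - v⟫) + ‖z - y‖ ^ 2 := by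
    rw [dist_eq_norm, dist_eq_norm, show x - z = (x - y) - (z - y) by abel, norm_sub_sq_real,
      ← neg_sub x y, inner_neg_right, real_inner_comm (x - y) v, inner_sub_right (x - y) (z - y)]
    ring
  rw [hexp, dist_eq_norm]
  refine (abs_add_le _ _).trans ?_
  rw [abs_neg, abs_mul, abs_two, abs_of_nonneg (sq_nonneg ‖z - y‖), mul_assoc]
  gcongr
  exact abs_real_inner_le_norm _ _

theorem ae_abs_inner_sub_le [MeasurableSpace E] {π : Measure (E × E)} {w : E → E} {D K : ℝ}
    (hπ : ∀ᵐ p ∂π, dist p.1 p.2 ≤ D) (hwK : ∀ y, ‖w y‖ ≤ K) :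
    ∀ᵐ p ∂π, |⟪w p.2, p.2 - p.1⟫| ≤ K * D :=
  hπ.mono fun p hp => (abs_real_inner_le_norm _ _).trans <|
    mul_le_mul (hwK _) (by rwa [← dist_eq_norm']) (norm_nonneg _) ((norm_nonneg _).trans (hwK 0))

variable [MeasurableSpace E] [BorelSpace E] [SecondCountableTopology E]
  {π : Measure (E × E)} [IsProbabilityMeasure π] {T w : E → E} {t a b D K : ℝ}

theorem abs_integral_dist_sq_sub_sub_le (hπ : ∀ᵐ p ∂π, dist p.1 p.2 ≤ D)
    (hT : Measurable T) (hw : Measurable w) (hwK : ∀ y, ‖w y‖ ≤ K) (ha : ∀ y, ‖T y - y‖ ≤ a)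
    (hb : ∀ y, ‖T y - y - t • w y‖ ≤ b) :
    |∫ p, dist p.1 (T p.2) ^ 2 ∂π - ∫ p, dist p.1 p.2 ^ 2 ∂π -
        2 * t * ∫ p, ⟪w p.2, p.2 - p.1⟫ ∂π| ≤ 2 * D * b + a ^ 2 := by
  have hD : 0 ≤ D := let ⟨p, hp⟩ := hπ.exists; dist_nonneg.trans hp
  have hA : Integrable (fun p : E × E => dist p.1 (T p.2) ^ 2) π := by
    refine .of_bound (by fun_prop) ((D + a) ^ 2) ?_
    filter_upwards [hπ] with p hp
    rw [Real.norm_of_nonneg (by positivity)]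
    gcongr
    exact (dist_triangle _ _ _).trans (add_le_add hp (by rw [dist_comm, dist_eq_norm]; exact ha _))
  have hB : Integrable (fun p : E × E => dist p.1 p.2 ^ 2) π := by
    refine .of_bound (by fun_prop) (D ^ 2) ?_
    filter_upwards [hπ] with p hp
    rw [Real.norm_of_nonneg (by positivity)]
    gcongr
  have hG : Integrable (fun p : E × E => ⟪w p.2, p.2 - p.1⟫) π := by
    refine .of_bound (by fun_prop) (K * D) ?_
    simpa only [Real.norm_eq_abs] using ae_abs_inner_sub_le hπ hwK
  have hsplit :
      ∫ p, (dist p.1 (T p.2) ^ 2 - dist p.1 p.2 ^ 2 - 2 * t * ⟪w p.2, p.2 - p.1⟫) ∂π =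
      ∫ p, dist p.1 (T p.2) ^ 2 ∂π - ∫ p, dist p.1 p.2 ^ 2 ∂π -
        2 * t * ∫ p, ⟪w p.2, p.2 - p.1⟫ ∂π := by
    have hAB : Integrable (fun p : E × E => dist p.1 (T p.2) ^ 2 - dist p.1 p.2 ^ 2) π :=
      hA.sub hB
    rw [integral_sub hAB (hG.const_mul _), integral_sub hA hB, integral_const_mul]
  rw [← hsplit, ← Real.norm_eq_abs]
  refine (norm_integral_le_of_norm_le_const (C := 2 * D * b + a ^ 2) ?_).trans_eq (by simp)
  filter_upwards [hπ] with p hp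
  have h := abs_dist_sq_sub_dist_sq_sub_inner_le p.1 p.2 (T p.2) (t • w p.2)
  rw [real_inner_smul_left, ← mul_assoc] at h
  refine h.trans ?_
  gcongr
  · exact hb _
  · exact ha _

end Expansion

section Perturbation

variable {E : Type*} [NormedAddCommGroup E] [InnerProductSpace ℝ E] [MeasurableSpace E]
  [BorelSpace E] [SecondCountableTopology E] {σ μ : Measure E} [IsProbabilityMeasure σ]
  {T w : E → E} {t a b D K : ℝ}

theorem W2sq_map_sub_W2sq_le {γ : Measure (E × E)} (hγ : IsCoupling γ σ μ)
    (hopt : ∫ p, dist p.1 p.2 ^ 2 ∂γ = W2sq σ μ) (hD : ∀ᵐ p ∂γ, dist p.1 p.2 ≤ D)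
    (hT : Measurable T) (hw : Measurable w) (hwK : ∀ y, ‖w y‖ ≤ K)
    (ha : ∀ y, ‖T y - y‖ ≤ a) (hb : ∀ y, ‖T y - y - t • w y‖ ≤ b) :
    W2sq σ (μ.map T) - W2sq σ μ ≤
      2 * t * ∫ p, ⟪w p.2, p.2 - p.1⟫ ∂γ + (2 * D * b + a ^ 2) := by
  have := hγ.isProbabilityMeasure
  have h := abs_le.1 (abs_integral_dist_sq_sub_sub_le hD hT hw hwK ha hb)
  linarith [W2sq_map_le_integral hγ hT]

theorem le_W2sq_map_sub_W2sq {η : Measure (E × E)} (hη : IsCoupling η σ μ)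
    (hopt : ∫ p, dist p.1 (T p.2) ^ 2 ∂η = W2sq σ (μ.map T))
    (hD : ∀ᵐ p ∂η, dist p.1 p.2 ≤ D)
    (hT : Measurable T) (hw : Measurable w) (hwK : ∀ y, ‖w y‖ ≤ K)
    (ha : ∀ y, ‖T y - y‖ ≤ a) (hb : ∀ y, ‖T y - y - t • w y‖ ≤ b) :
    2 * t * ∫ p, ⟪w p.2, p.2 - p.1⟫ ∂η - (2 * D * b + a ^ 2) ≤
      W2sq σ (μ.map T) - W2sq σ μ := by
  have := hη.isProbabilityMeasure
  have h := abs_le.1 (abs_integral_dist_sq_sub_sub_le hD hT hw hwK ha hb)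
  linarith [W2sq_le_integral hη]

end Perturbation

theorem tendsto_integral_of_ae_abs_le {X ι : Type*} [TopologicalSpace X] [MeasurableSpace X]
    {l : Filter ι} {ν : ι → Measure X} {ν₀ : Measure X} {f : X → ℝ} {M : ℝ}
    (hweak : ∀ g : X → ℝ, Continuous g → (∃ C, ∀ x, |g x| ≤ C) →
      Tendsto (fun i => ∫ x, g x ∂ν i) l (𝓝 (∫ x, g x ∂ν₀)))
    (hf : Continuous f) (hν : ∀ᶠ i in l, ∀ᵐ x ∂ν i, |f x| ≤ M)
    (hν₀ : ∀ᵐ x ∂ν₀, |f x| ≤ M) :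
    Tendsto (fun i => ∫ x, f x ∂ν i) l (𝓝 (∫ x, f x ∂ν₀)) := by
  set g : X → ℝ := fun x => max (-M) (min M (f x))
  have hg : ∀ x, |f x| ≤ M → g x = f x := fun x hx => by
    simp only [g, min_eq_right (abs_le.1 hx).2, max_eq_right (abs_le.1 hx).1]
  have hgf : ∀ ρ : Measure X, (∀ᵐ x ∂ρ, |f x| ≤ M) → ∫ x, g x ∂ρ = ∫ x, f x ∂ρ :=
    fun ρ hρ => integral_congr_ae (hρ.mono hg)
  have hbound : ∀ x, |g x| ≤ |M| := fun x =>
    abs_le.2 ⟨(neg_le_neg (le_abs_self M)).trans (le_max_left _ _),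
      max_le (neg_le_abs M) ((min_le_left _ _).trans (le_abs_self M))⟩
  rw [← hgf ν₀ hν₀]
  exact (hweak g (by fun_prop) ⟨|M|, hbound⟩).congr' (hν.mono fun i hi => hgf (ν i) hi)

theorem tendsto_div_of_quadratic_bounds {D u : ℝ → ℝ} {L C : ℝ}
    (hlower : ∀ᶠ t in 𝓝[>] 0, 2 * t * u t - C * t ^ 2 ≤ D t)
    (hupper : ∀ᶠ t in 𝓝[>] 0, D t ≤ 2 * t * L + C * t ^ 2)
    (hu : Tendsto u (𝓝[>] 0) (𝓝 L)) :
    Tendsto (fun t => D t / t) (𝓝[>] 0) (𝓝 (2 * L)) := by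
  have hCt : Tendsto (fun t => C * t) (𝓝[>] (0 : ℝ)) (𝓝 0) := by
    simpa using ((continuous_const_mul C).tendsto 0).mono_left nhdsWithin_le_nhds
  refine tendsto_of_tendsto_of_tendsto_of_le_of_le' (by simpa using (hu.const_mul 2).sub hCt)
    (by simpa using hCt.const_add (2 * L)) ?_ ?_
  · filter_upwards [hlower, self_mem_nhdsWithin] with t ht (htpos : 0 < t)
    rw [le_div_iff₀ htpos]
    linarith
  · filter_upwards [hupper, self_mem_nhdsWithin] with t ht (htpos : 0 < t)
    rw [div_le_iff₀ htpos]
    linarith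

theorem ContDiff.gradient {E : Type*} [NormedAddCommGroup E] [InnerProductSpace ℝ E]
    [CompleteSpace E] {ψ : E → ℝ} {m n : WithTop ℕ∞} (hψ : ContDiff ℝ n ψ)
    (hmn : m + 1 ≤ n) :
    ContDiff ℝ m (gradient ψ) :=
  (InnerProductSpace.toDual ℝ E).symm.toContinuousLinearEquiv.contDiff.comp (hψ.fderiv_right hmn)

theorem stmt17_general {m : ℕ} (σ μ : Measure (EuclideanSpace ℝ (Fin m)))
    [IsProbabilityMeasure σ]
    (hσc : ∃ K : Set (EuclideanSpace ℝ (Fin m)), IsCompact K ∧ σ Kᶜ = 0)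
    (hμc : ∃ K : Set (EuclideanSpace ℝ (Fin m)), IsCompact K ∧ μ Kᶜ = 0)
    (γ : Measure (EuclideanSpace ℝ (Fin m) × EuclideanSpace ℝ (Fin m)))
    (hγ₁ : γ.map Prod.fst = σ) (hγ₂ : γ.map Prod.snd = μ)
    (hopt : ∫ p, dist p.1 p.2 ^ 2 ∂γ = W2sq σ μ)
    (ψ : EuclideanSpace ℝ (Fin m) → ℝ) (hψ : ContDiff ℝ 2 ψ)
    (K₁ K₂ : ℝ) (hgrad : ∀ x, ‖gradient ψ x‖ ≤ K₁)
    (hhess : ∀ x, ‖fderiv ℝ (gradient ψ) x‖ ≤ K₂)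
    (U V : ℝ → EuclideanSpace ℝ (Fin m) → EuclideanSpace ℝ (Fin m))
    (hU0 : ∀ x, U 0 x = x)
    (hUflow : ∀ x t, HasDerivAt (fun s => U s x) (gradient ψ (U t x)) t)
    (hVmeas : ∀ t, Measurable (V t))
    (hVinv : ∀ t x, V t (U t x) = x ∧ U t (V t x) = x)
    (γt : ℝ → Measure (EuclideanSpace ℝ (Fin m) × EuclideanSpace ℝ (Fin m)))
    (hγt₁ : ∀ t ∈ Set.Ioc (0:ℝ) 1, (γt t).map Prod.fst = σ)
    (hγt₂ : ∀ t ∈ Set.Ioc (0:ℝ) 1, (γt t).map Prod.snd = μ.map (U t))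
    (hγtopt : ∀ t ∈ Set.Ioc (0:ℝ) 1,
      ∫ p, dist p.1 p.2 ^ 2 ∂(γt t) = W2sq σ (μ.map (U t)))
    (hweak : ∀ f : EuclideanSpace ℝ (Fin m) × EuclideanSpace ℝ (Fin m) → ℝ,
      Continuous f → (∃ Kb : ℝ, ∀ p, |f p| ≤ Kb) →
      Tendsto (fun t => ∫ p, f p ∂((γt t).map (fun q => (q.1, V t q.2))))
        (nhdsWithin 0 (Set.Ioi 0)) (nhds (∫ p, f p ∂γ))) :
    Tendsto (fun t => (W2sq σ (μ.map (U t)) - W2sq σ μ) / t)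
      (nhdsWithin 0 (Set.Ioi 0))
      (nhds (2 * ∫ p, ⟪gradient ψ p.2, p.2 - p.1⟫ ∂γ)) := by
  obtain ⟨D, hD⟩ := exists_forall_isCoupling_ae_dist_le hσc hμc
  have hγ : IsCoupling γ σ μ := ⟨hγ₁, hγ₂⟩
  have hgradψ : ContDiff ℝ 1 (gradient ψ) := hψ.gradient (by norm_num)
  have hlip : LipschitzWith K₂.toNNReal (gradient ψ) :=
    lipschitzWith_of_nnnorm_fderiv_le (hgradψ.differentiable one_ne_zero)
      fun x => by simpa [← NNReal.coe_le_coe] using (hhess x).trans (le_max_left K₂ 0)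
  have hUm : ∀ t, Measurable (U t) := fun t =>
    (hVmeas t).measurable_of_inverse (fun x => (hVinv t x).1) fun x => (hVinv t x).2
  have hη : ∀ t ∈ Ioc (0 : ℝ) 1, IsCoupling ((γt t).map fun q => (q.1, V t q.2)) σ μ :=
    fun t ht => IsCoupling.map_right_of_leftInverse ⟨hγt₁ t ht, hγt₂ t ht⟩ (hUm t)
      (hVmeas t) fun x => (hVinv t x).1
  have hC : ∀ t, 2 * D * (K₂.toNNReal * K₁ * t ^ 2) + (K₁ * t) ^ 2 =
      (2 * D * K₂.toNNReal * K₁ + K₁ ^ 2) * t ^ 2 := fun t => by ring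
  have hIoc : Ioc (0 : ℝ) 1 ∈ 𝓝[>] 0 := Ioc_mem_nhdsGT one_pos
  refine tendsto_div_of_quadratic_bounds (C := 2 * D * K₂.toNNReal * K₁ + K₁ ^ 2) ?_ ?_
    (tendsto_integral_of_ae_abs_le hweak (by fun_prop)
      (eventually_of_mem hIoc fun t ht => ae_abs_inner_sub_le (hD _ (hη t ht)) hgrad)
      (ae_abs_inner_sub_le (hD γ hγ) hgrad))
  · filter_upwards [hIoc] with t ht
    rw [← hC]
    refine le_W2sq_map_sub_W2sq (hη t ht) ?_ (hD _ (hη t ht)) (hUm t)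
      hgradψ.continuous.measurable hgrad (fun x => norm_flow_sub_le hU0 hUflow hgrad x ht.1.le)
      (fun x => norm_flow_sub_sub_smul_le hU0 hUflow hgrad hlip x ht.1.le)
    rw [integral_dist_sq_map_right (hVmeas t) (hUm t)]
    simpa only [(hVinv t _).2] using hγtopt t ht
  · filter_upwards [hIoc] with t ht
    rw [← hC]
    exact W2sq_map_sub_W2sq_le hγ hopt (hD γ hγ) (hUm t) hgradψ.continuous.measurable hgrad
      (fun x => norm_flow_sub_le hU0 hUflow hgrad x ht.1.le)
      (fun x => norm_flow_sub_sub_smul_le hU0 hUflow hgrad hlip x ht.1.le)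

/-- Theorem 4.2 of the paper in Euclidean form: if `γ` is an optimal coupling of the
compactly supported probability measures `σ, μ`, `μ_t = (U_t)_#μ` with `U_t` the flow
of `∇ψ` (with inverse flow `V_t`), `γ_t` are optimal couplings of `σ` and `μ_t`, and
the couplings `η_t = ((x,y) ↦ (x, V_t(y)))_#γ_t` of `σ` and `μ` converge weakly to `γ`
as `t → 0⁺`, then `lim_{t→0⁺} (W₂²(σ,μ_t) − W₂²(σ,μ))/t = 2∫⟨∇ψ(y), y − x⟩ dγ(x,y)`. -/
theorem stmt17 {m : ℕ} (σ μ : Measure (EuclideanSpace ℝ (Fin m)))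
    [IsProbabilityMeasure σ] [IsProbabilityMeasure μ]
    (hσc : ∃ K : Set (EuclideanSpace ℝ (Fin m)), IsCompact K ∧ σ Kᶜ = 0)
    (hμc : ∃ K : Set (EuclideanSpace ℝ (Fin m)), IsCompact K ∧ μ Kᶜ = 0)
    (γ : Measure (EuclideanSpace ℝ (Fin m) × EuclideanSpace ℝ (Fin m)))
    (hγ₁ : γ.map Prod.fst = σ) (hγ₂ : γ.map Prod.snd = μ)
    (hopt : ∫ p, dist p.1 p.2 ^ 2 ∂γ = W2sq σ μ)
    (ψ : EuclideanSpace ℝ (Fin m) → ℝ) (hψ : ContDiff ℝ 2 ψ)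
    (K₁ K₂ : ℝ) (hgrad : ∀ x, ‖gradient ψ x‖ ≤ K₁)
    (hhess : ∀ x, ‖fderiv ℝ (gradient ψ) x‖ ≤ K₂)
    (U V : ℝ → EuclideanSpace ℝ (Fin m) → EuclideanSpace ℝ (Fin m))
    (hU0 : ∀ x, U 0 x = x)
    (hUflow : ∀ x t, HasDerivAt (fun s => U s x) (gradient ψ (U t x)) t)
    (hVmeas : ∀ t, Measurable (V t))
    (hVinv : ∀ t x, V t (U t x) = x ∧ U t (V t x) = x)
    (γt : ℝ → Measure (EuclideanSpace ℝ (Fin m) × EuclideanSpace ℝ (Fin m)))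
    (hγt₁ : ∀ t ∈ Set.Ioc (0:ℝ) 1, (γt t).map Prod.fst = σ)
    (hγt₂ : ∀ t ∈ Set.Ioc (0:ℝ) 1, (γt t).map Prod.snd = μ.map (U t))
    (hγtopt : ∀ t ∈ Set.Ioc (0:ℝ) 1,
      ∫ p, dist p.1 p.2 ^ 2 ∂(γt t) = W2sq σ (μ.map (U t)))
    (hweak : ∀ f : EuclideanSpace ℝ (Fin m) × EuclideanSpace ℝ (Fin m) → ℝ,
      Continuous f → (∃ Kb : ℝ, ∀ p, |f p| ≤ Kb) →
      Tendsto (fun t => ∫ p, f p ∂((γt t).map (fun q => (q.1, V t q.2))))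
        (nhdsWithin 0 (Set.Ioi 0)) (nhds (∫ p, f p ∂γ))) :
    Tendsto (fun t => (W2sq σ (μ.map (U t)) - W2sq σ μ) / t)
      (nhdsWithin 0 (Set.Ioi 0))
      (nhds (2 * ∫ p, ⟪gradient ψ p.2, p.2 - p.1⟫ ∂γ)) :=
  stmt17_general σ μ hσc hμc γ hγ₁ hγ₂ hopt ψ hψ K₁ K₂ hgrad hhess U V hU0 hUflow hVmeas hVinv γt
    hγt₁ hγt₂ hγtopt hweak
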